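/- For integers c ≥ 0 and m ≥ 1, in ℚ(q): ∑_{k=0}^{c} [k+1;q]_{m−1} [k−c−m+1;q]_{m−1} q^k = (−1)^{m−1} q^{(−m+1)(2c+m)/2} · ([1;q]_{m−1})² [c+1;q]_{2m−1} / [1;q]_{2m−1}. -/

import Mathlib

/-- The `q`-integer `[m;q] = (1 - q^m)/(1 - q)` in `ℚ(q)`, for any integer `m`. -/
noncomputable def qint (m : ℤ) : RatFunc ℚ := (1 - RatFunc.X ^ m) / (1 - RatFunc.X)

/-- `[a;q]_n = ∏_{i=0}^{n−1} [a+i;q]`. -/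
noncomputable def qpoch (a : ℤ) (n : ℕ) : RatFunc ℚ := ∏ i ∈ Finset.range n, qint (a + i)

lemma X_pow_ne_one (n : ℕ) (hn : n ≠ 0) : (RatFunc.X : RatFunc ℚ) ^ n ≠ 1 := by
  intro h
  have h2 : (algebraMap (Polynomial ℚ) (RatFunc ℚ)) (Polynomial.X ^ n) =
      (algebraMap (Polynomial ℚ) (RatFunc ℚ)) 1 := by
    simpa [map_pow, RatFunc.algebraMap_X] using h
  have := RatFunc.algebraMap_injective ℚ h2
  have hd := congrArg Polynomial.natDegree this
  simp [Polynomial.natDegree_X_pow] at hd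
  exact hn hd

lemma X_zpow_ne_one (j : ℤ) (hj : j ≠ 0) : (RatFunc.X : RatFunc ℚ) ^ j ≠ 1 := by
  rcases j.lt_or_lt_of_ne hj with h | h
  · intro he
    have h1 : (RatFunc.X : RatFunc ℚ) ^ (-j) = 1 := by
      rw [zpow_neg, he, inv_one]
    rw [show (-j) = ((-j).toNat : ℤ) by omega, zpow_natCast] at h1
    exact X_pow_ne_one _ (by omega) h1
  · intro he
    rw [show j = (j.toNat : ℤ) by omega, zpow_natCast] at he
    exact X_pow_ne_one _ (by omega) he

lemma one_sub_X_ne : (1 : RatFunc ℚ) - RatFunc.X ≠ 0 := by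
  have := X_pow_ne_one 1 one_ne_zero
  simp only [pow_one] at this
  exact sub_ne_zero.mpr (Ne.symm this)

lemma qint_ne_zero (j : ℤ) (hj : j ≠ 0) : qint j ≠ 0 :=
  div_ne_zero (sub_ne_zero.mpr (Ne.symm (X_zpow_ne_one j hj))) one_sub_X_ne

lemma qint_pascal (j a : ℤ) : qint (j + a) = qint j + RatFunc.X ^ j * qint a := by
  unfold qint
  rw [← mul_div_assoc, ← add_div]
  congr 1
  rw [zpow_add₀ RatFunc.X_ne_zero]
  ring

lemma qint_neg (j : ℤ) : qint (-j) = -(RatFunc.X ^ (-j)) * qint j := by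
  unfold qint
  rw [neg_mul, ← mul_div_assoc, ← neg_div]
  congr 1
  have h : (RatFunc.X : RatFunc ℚ) ^ (-j) * RatFunc.X ^ j = 1 := by
    rw [← zpow_add₀ RatFunc.X_ne_zero]; simp
  linear_combination -h

lemma X_zpow_sum (f : ℕ → ℤ) (n : ℕ) :
    ∏ i ∈ Finset.range n, (RatFunc.X : RatFunc ℚ) ^ (f i)
      = RatFunc.X ^ (∑ i ∈ Finset.range n, f i) := by
  induction n with
  | zero => simp
  | succ n ih => rw [Finset.prod_range_succ, Finset.sum_range_succ, ih,
      zpow_add₀ RatFunc.X_ne_zero]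

lemma qpoch_zero (a : ℤ) : qpoch a 0 = 1 := by simp [qpoch]

lemma qpoch_succ (a : ℤ) (n : ℕ) : qpoch a (n + 1) = qpoch a n * qint (a + n) := by
  simp [qpoch, Finset.prod_range_succ]

lemma qpoch_succ' (a : ℤ) (n : ℕ) : qpoch a (n + 1) = qint a * qpoch (a + 1) n := by
  rw [qpoch, Finset.prod_range_succ', qpoch, mul_comm]
  congr 1
  · norm_num
  · apply Finset.prod_congr rfl
    intro i _
    congr 1
    push_cast; ring

lemma qpoch_pos_ne_zero (a : ℤ) (ha : 0 < a) (n : ℕ) : qpoch a n ≠ 0 := by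
  rw [qpoch]
  apply Finset.prod_ne_zero_iff.mpr
  intro i _
  exact qint_ne_zero _ (by omega)

lemma qpoch_reflect (a : ℤ) (n : ℕ) :
    qpoch a n = (-1) ^ n * RatFunc.X ^ (∑ i ∈ Finset.range n, (a + i)) *
      qpoch (1 - a - n) n := by
  rw [qpoch]
  have h1 : ∀ i ∈ Finset.range n, qint (a + i) =
      (-(RatFunc.X ^ (a + (i:ℤ)))) * qint (-(a + i)) := by
    intro i _
    have := qint_neg (-(a + i))
    simpa using this
  rw [Finset.prod_congr rfl h1, Finset.prod_mul_distrib]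
  have h2 : ∏ i ∈ Finset.range n, (-(RatFunc.X ^ (a + (i:ℤ)) : RatFunc ℚ)) =
      (-1) ^ n * RatFunc.X ^ (∑ i ∈ Finset.range n, (a + i)) := by
    have h3 : ∀ i ∈ Finset.range n, (-(RatFunc.X ^ (a + (i:ℤ)) : RatFunc ℚ)) =
        (-1) * RatFunc.X ^ (a + (i:ℤ)) := by intros; ring
    rw [Finset.prod_congr rfl h3, Finset.prod_mul_distrib, Finset.prod_const,
      Finset.card_range, X_zpow_sum (fun i => a + i)]
  rw [h2, qpoch]
  congr 1
  rw [← Finset.prod_range_reflect]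
  apply Finset.prod_congr rfl
  intro j hj
  rw [Finset.mem_range] at hj
  congr 1
  omega

/-- The Gaussian binomial `[k+a choose a]_q` as an element of `ℚ(q)`. -/
noncomputable def M (a k : ℕ) : RatFunc ℚ := qpoch (k + 1) a / qpoch 1 a

lemma M_zero_left (k : ℕ) : M 0 k = 1 := by simp [M, qpoch_zero]

lemma M_zero_right (a : ℕ) : M a 0 = 1 := by
  rw [M]
  norm_num
  exact qpoch_pos_ne_zero 1 one_pos a

lemma qpoch_one_mul_M (a k : ℕ) : qpoch 1 a * M a k = qpoch ((k:ℤ) + 1) a := by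
  rw [M, mul_div_cancel₀ _ (qpoch_pos_ne_zero 1 one_pos a)]

lemma Mpascal (a k : ℕ) :
    M (a + 1) (k + 1) = M (a + 1) k + RatFunc.X ^ (k + 1) * M a (k + 1) := by
  have h1 : qpoch ((k:ℤ) + 1 + 1) (a + 1) = qpoch ((k:ℤ) + 2) a * qint ((k:ℤ) + 2 + a) := by
    rw [qpoch_succ]; ring_nf
  have h2 : qpoch ((k:ℤ) + 1) (a + 1) = qint ((k:ℤ) + 1) * qpoch ((k:ℤ) + 2) a := by
    rw [qpoch_succ']; ring_nf
  have h3 : qpoch 1 (a + 1) = qpoch 1 a * qint (1 + a) := qpoch_succ 1 a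
  have hp : qint ((k:ℤ) + 2 + a) = qint ((k:ℤ) + 1) + RatFunc.X ^ ((k:ℤ)+1) * qint (1 + a) := by
    have := qint_pascal ((k:ℤ) + 1) (1 + a)
    rw [← this]; congr 1; ring
  have hzp : (RatFunc.X : RatFunc ℚ) ^ ((k:ℤ) + 1) = RatFunc.X ^ (k + 1) := by
    rw [show ((k:ℤ) + 1) = ((k + 1 : ℕ) : ℤ) by push_cast; ring, zpow_natCast]
  rw [M, M, M]
  push_cast
  rw [h1, h2, h3, hp, hzp]
  have n1 : qpoch (1:ℤ) a ≠ 0 := qpoch_pos_ne_zero 1 one_pos a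
  have n2 : qint (1 + (a:ℤ)) ≠ 0 := qint_ne_zero _ (by omega)
  field_simp
  ring

lemma sumM (a c : ℕ) :
    ∑ k ∈ Finset.range (c + 1), M a k * RatFunc.X ^ k = M (a + 1) c := by
  induction c with
  | zero => simp [M_zero_right]
  | succ c ih =>
    rw [Finset.sum_range_succ, ih, Mpascal]
    ring

lemma mainW (b a c : ℕ) :
    ∑ k ∈ Finset.range (c + 1), M a k * M b (c - k) * RatFunc.X ^ ((b + 1) * k)
      = M (a + b + 1) c := by
  induction b generalizing c with
  | zero =>
    simpa [M_zero_left, one_mul] using sumM a c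
  | succ b ihb =>
    induction c with
    | zero => simp [M_zero_right]
    | succ c ihc =>
      have split : ∀ k ∈ Finset.range (c + 1),
          M a k * M (b + 1) (c + 1 - k) * RatFunc.X ^ ((b + 1 + 1) * k)
          = M a k * M (b + 1) (c - k) * RatFunc.X ^ ((b + 1 + 1) * k)
            + RatFunc.X ^ (c + 1) *
              (M a k * M b (c + 1 - k) * RatFunc.X ^ ((b + 1) * k)) := by
        intro k hk
        rw [Finset.mem_range] at hk
        have h1 : c + 1 - k = (c - k) + 1 := by omega
        rw [h1, Mpascal]
        have h2 : (RatFunc.X : RatFunc ℚ) ^ (c - k + 1) * RatFunc.X ^ ((b + 1 + 1) * k)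
            = RatFunc.X ^ (c + 1) * RatFunc.X ^ ((b + 1) * k) := by
          rw [← pow_add, ← pow_add, show (b + 1 + 1) * k = k + (b + 1) * k by ring]
          congr 1
          omega
        linear_combination M a k * M b (c - k + 1) * h2
      rw [Finset.sum_range_succ, Finset.sum_congr rfl split, Finset.sum_add_distrib,
        ihc, ← Finset.mul_sum]
      have last : M a (c + 1) * M (b + 1) (c + 1 - (c + 1)) * RatFunc.X ^ ((b + 1 + 1) * (c + 1))
          = RatFunc.X ^ (c + 1) *
            (M a (c + 1) * M b (c + 1 - (c + 1)) * RatFunc.X ^ ((b + 1) * (c + 1))) := by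
        simp only [Nat.sub_self, M_zero_right]
        rw [show (b + 1 + 1) * (c + 1) = (c + 1) + (b + 1) * (c + 1) by ring, pow_add]
        ring
      rw [last, add_assoc, ← mul_add, ← Finset.sum_range_succ
        (fun k => M a k * M b (c + 1 - k) * RatFunc.X ^ ((b + 1) * k)), ihb (c + 1)]
      rw [show a + (b + 1) + 1 = (a + b + 1) + 1 by ring, Mpascal (a + b + 1) c]

lemma sum_range_int (n : ℕ) : 2 * ∑ i ∈ Finset.range n, (i : ℤ) = n * n - n := by
  induction n with
  | zero => simp
  | succ n ih =>
    rw [Finset.sum_range_succ, mul_add, ih]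
    push_cast
    ring

/-- `q`-Chu–Vandermonde: for `c ≥ 0`, `m ≥ 1`,
`∑_{k=0}^{c} [k+1;q]_{m−1} [k−c−m+1;q]_{m−1} q^k
  = (−1)^{m−1} q^{(−m+1)(2c+m)/2} ([1;q]_{m−1})² [c+1;q]_{2m−1} / [1;q]_{2m−1}`. -/
theorem stmt_16 (c m : ℕ) (hm : 1 ≤ m) :
    ∑ k ∈ Finset.range (c + 1),
        qpoch ((k : ℤ) + 1) (m - 1) * qpoch ((k : ℤ) - c - m + 1) (m - 1) *
          (RatFunc.X : RatFunc ℚ) ^ k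
    = (-1) ^ (m - 1) * (RatFunc.X : RatFunc ℚ) ^ (((-(m : ℤ) + 1) * (2 * c + m)) / 2) *
        (qpoch 1 (m - 1)) ^ 2 * qpoch ((c : ℤ) + 1) (2 * m - 1) / qpoch 1 (2 * m - 1) := by
  obtain ⟨n, rfl⟩ : ∃ n, m = n + 1 := ⟨m - 1, by omega⟩
  simp only [Nat.add_sub_cancel, show 2 * (n + 1) - 1 = 2 * n + 1 from by omega]
  obtain ⟨t, ht, htdef⟩ : ∃ t : ℤ, ((n:ℤ) * (n + 1) = t + t) ∧
      t = (n:ℤ) * n - ∑ i ∈ Finset.range n, (i:ℤ) :=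
    ⟨_, by linear_combination sum_range_int n, rfl⟩
  have hE : ((-(↑(n+1) : ℤ) + 1) * (2 * ↑c + ↑(n+1))) / 2 = -(n:ℤ) * c - t := by
    rw [show ((-(↑(n+1) : ℤ) + 1) * (2 * ↑c + ↑(n+1))) = 2 * (-(n:ℤ) * c - t) from by
      push_cast; linear_combination -ht]
    exact Int.mul_ediv_cancel_left _ two_ne_zero
  have h2n : qpoch ((c:ℤ) + 1) (2 * n + 1) = qpoch 1 (2 * n + 1) * M (2 * n + 1) c :=
    (qpoch_one_mul_M (2 * n + 1) c).symm
  rw [h2n, hE]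
  rw [mul_comm (qpoch 1 (2*n+1)) (M (2*n+1) c), ← mul_assoc,
    mul_div_assoc, div_self (qpoch_pos_ne_zero 1 one_pos (2*n+1)), mul_one]
  have hW := mainW n n c
  rw [show n + n + 1 = 2 * n + 1 from by ring] at hW
  rw [← hW, Finset.mul_sum]
  apply Finset.sum_congr rfl
  intro k hk
  rw [Finset.mem_range] at hk
  have harg : (k:ℤ) - ↑c - ↑(n+1) + 1 = (k:ℤ) - c - n := by push_cast; ring
  rw [harg, qpoch_reflect ((k:ℤ) - c - n) n]
  have harg2 : (1:ℤ) - ((k:ℤ) - c - n) - n = ((c - k : ℕ) : ℤ) + 1 := by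
    push_cast [Nat.cast_sub (by omega : k ≤ c)]; ring
  rw [harg2, ← qpoch_one_mul_M n (c - k), ← qpoch_one_mul_M n k]
  have hx : (RatFunc.X : RatFunc ℚ) ^ (∑ i ∈ Finset.range n, (((k:ℤ) - c - n) + i)) *
      RatFunc.X ^ ((k : ℤ)) =
      RatFunc.X ^ (-(n:ℤ) * c - t) * RatFunc.X ^ ((((n+1) * k : ℕ) : ℤ)) := by
    rw [← zpow_add₀ RatFunc.X_ne_zero, ← zpow_add₀ RatFunc.X_ne_zero]
    congr 1
    rw [Finset.sum_add_distrib, Finset.sum_const, Finset.card_range, nsmul_eq_mul]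
    push_cast
    linear_combination htdef
  rw [← zpow_natCast (RatFunc.X : RatFunc ℚ) k, ← zpow_natCast (RatFunc.X : RatFunc ℚ) ((n+1) * k)]
  linear_combination ((-1:RatFunc ℚ)) ^ n * qpoch 1 n * M n k * (qpoch 1 n * M n (c - k)) * hx
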